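/- Let M be an SNP matrix and H' a haplotype such that (H', H₂) ∈ OptPairs(M) for some H₂. Then OptPairs(M ∪ {H'}) = OptPairs(M, H'), where OptPairs(M, H') is the set of optimal pairs of M having H' as one component. -/

import Mathlib

open Finset

/-- A row of an SNP matrix: entries in {0,1,-} (`none` is a hole). -/
abbrev Row (m : ℕ) := Fin m → Option Bool

/-- A haplotype: a hole-free binary string. -/
abbrev Hap (m : ℕ) := Fin m → Bool

/-- `dist r H`: the number of positions where `r` has a non-hole value differing from `H`. -/
def dist {m : ℕ} (r : Row m) (H : Hap m) : ℕ :=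
  (univ.filter (fun j => r j ≠ none ∧ r j ≠ some (H j))).card

/-- `DM M H₁ H₂ = Σ over rows r of M of min(d(r,H₁), d(r,H₂))`. -/
def DM {m : ℕ} (M : Multiset (Row m)) (H1 H2 : Hap m) : ℕ :=
  (M.map (fun r => min (dist r H1) (dist r H2))).sum

/-- MEC(M): the minimum of `DM M H₁ H₂` over all haplotype pairs. -/
noncomputable def MEC {m : ℕ} (M : Multiset (Row m)) : ℕ :=
  sInf {v : ℕ | ∃ H1 H2 : Hap m, DM M H1 H2 = v}

/-- The set of optimal haplotype pairs for `M`. -/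
def OptPairs {m : ℕ} (M : Multiset (Row m)) : Set (Hap m × Hap m) :=
  {p | DM M p.1 p.2 = MEC M}

/-! Appending a row `r` adds `min (d(r,H₁), d(r,H₂))` to the cost of every pair, and for `r = H'`
this is `0` exactly on the pairs containing `H'`. Since some optimal pair of `M` contains `H'`,
the MEC value does not change, so the optimal pairs of the extended matrix are the optimal pairs
of `M` that contain `H'`. -/

lemma MEC_le {m : ℕ} (M : Multiset (Row m)) (H1 H2 : Hap m) : MEC M ≤ DM M H1 H2 :=
  Nat.sInf_le ⟨H1, H2, rfl⟩

lemma DM_cons {m : ℕ} (r : Row m) (M : Multiset (Row m)) (H1 H2 : Hap m) :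
    DM (r ::ₘ M) H1 H2 = min (dist r H1) (dist r H2) + DM M H1 H2 := by
  simp [DM]

lemma MEC_le_MEC_cons {m : ℕ} (r : Row m) (M : Multiset (Row m)) : MEC M ≤ MEC (r ::ₘ M) := by
  obtain ⟨H1, H2, hattained⟩ : MEC (r ::ₘ M) ∈ {v | ∃ H1 H2 : Hap m, DM (r ::ₘ M) H1 H2 = v} :=
    Nat.sInf_mem ⟨_, default, default, rfl⟩
  rw [← hattained, DM_cons]
  exact (MEC_le M H1 H2).trans (Nat.le_add_left _ _)

section ConsMatched

variable {m : ℕ} {r : Row m} {M : Multiset (Row m)} {p : Hap m × Hap m}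

lemma MEC_cons_of_mem_OptPairs (hp : p ∈ OptPairs M) (hr : min (dist r p.1) (dist r p.2) = 0) :
    MEC (r ::ₘ M) = MEC M := by
  refine le_antisymm ?_ (MEC_le_MEC_cons r M)
  calc MEC (r ::ₘ M) ≤ DM (r ::ₘ M) p.1 p.2 := MEC_le _ _ _
    _ = MEC M := by rw [DM_cons, hr, zero_add, hp]

lemma OptPairs_cons_of_mem_OptPairs (hp : p ∈ OptPairs M)
    (hr : min (dist r p.1) (dist r p.2) = 0) :
    OptPairs (r ::ₘ M) = {q ∈ OptPairs M | min (dist r q.1) (dist r q.2) = 0} := by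
  ext q
  have hle := MEC_le M q.1 q.2
  simp only [OptPairs, Set.mem_ofPred_eq, MEC_cons_of_mem_OptPairs hp hr, DM_cons]
  omega

end ConsMatched

lemma dist_some_eq_zero_iff {m : ℕ} (H' H : Hap m) :
    dist (fun j => some (H' j)) H = 0 ↔ H' = H := by
  simp [_root_.dist, Finset.filter_eq_empty_iff, funext_iff]

/-- ANCHORED-DFN correctness: if `H'` occurs in some optimal pair of `M`, then the optimal
pairs of `M` with row `H'` appended are exactly the optimal pairs of `M` containing `H'`. -/
theorem OptPairs_append_anchor {m : ℕ} (M : Multiset (Row m)) (H' : Hap m)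
    (hopt : ∃ H2 : Hap m, (H', H2) ∈ OptPairs M) :
    OptPairs ((fun j => some (H' j)) ::ₘ M)
      = {p ∈ OptPairs M | p.1 = H' ∨ p.2 = H'} := by
  obtain ⟨H2, hH2⟩ := hopt
  rw [OptPairs_cons_of_mem_OptPairs hH2 (by simp [dist_some_eq_zero_iff])]
  ext q
  simp only [Set.mem_sep_iff, Nat.min_eq_zero_iff, dist_some_eq_zero_iff, @eq_comm _ H']
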